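/- Let A be a unital ℂ-algebra with invertible elements u, v, and let ⟨⟨-,-⟩⟩ be a double bracket on A satisfying ⟨⟨v,v⟩⟩ = (1/2)(v²⊗1 − 1⊗v²), ⟨⟨u,u⟩⟩ = −(1/2)(u²⊗1 − 1⊗u²), and ⟨⟨v,u⟩⟩ = (1/2)(uv⊗1 + 1⊗vu − v⊗u + u⊗v). Fix λ ∈ ℂ and set h_λ = u + v + u⁻¹ + v⁻¹ + λ(u⁻¹v⁻¹ + vu). Then for all integers k, ℓ ≥ 1, the element m(⟨⟨h_λ^k, h_λ^ℓ⟩⟩) lies in the ℂ-linear span [A,A] of commutators, where m : A⊗A → A is the multiplication map; equivalently, the classes of the powers h_λ^k in A/[A,A] pairwise commute under the induced bracket {x,y}_♯ = m(⟨⟨x,y⟩⟩). -/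
import Mathlib


open TensorProduct

noncomputable section

namespace Stmt16

variable {A : Type*} [Ring A] [Algebra ℂ A]

/-- The flip `(c ⊗ d)^∘ = d ⊗ c` on `A ⊗[ℂ] A`. -/
def flipT : A ⊗[ℂ] A →ₗ[ℂ] A ⊗[ℂ] A := (TensorProduct.comm ℂ A A).toLinearMap

/-- The outer bimodule structure `a ⬝ (d' ⊗ d'') ⬝ b = (a d') ⊗ (d'' b)`. -/
def outerAct (a b : A) : A ⊗[ℂ] A →ₗ[ℂ] A ⊗[ℂ] A :=
  TensorProduct.map (LinearMap.mulLeft ℂ a) (LinearMap.mulRight ℂ b)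

/-- The inner bimodule structure `a ∗ (d' ⊗ d'') ∗ b = (d' b) ⊗ (a d'')`. -/
def innerAct (a b : A) : A ⊗[ℂ] A →ₗ[ℂ] A ⊗[ℂ] A :=
  TensorProduct.map (LinearMap.mulRight ℂ b) (LinearMap.mulLeft ℂ a)

/-- Axioms of a double bracket on `A`. -/
structure IsDoubleBracket (br : A →ₗ[ℂ] A →ₗ[ℂ] A ⊗[ℂ] A) : Prop where
  cyclic : ∀ a b : A, br a b = - flipT (br b a)
  right_der : ∀ a b c : A, br a (b * c) = outerAct 1 c (br a b) + outerAct b 1 (br a c)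
  left_der : ∀ a b c : A, br (b * c) a = innerAct 1 c (br b a) + innerAct b 1 (br c a)

/-- The modified Kontsevich Hamiltonian `h_λ = u + v + u⁻¹ + v⁻¹ + λ(u⁻¹ v⁻¹ + v u)`. -/
def kontH (u v : Aˣ) (l : ℂ) : A :=
  (u : A) + (v : A) + ((u⁻¹ : Aˣ) : A) + ((v⁻¹ : Aˣ) : A)
    + l • (((u⁻¹ : Aˣ) : A) * ((v⁻¹ : Aˣ) : A) + (v : A) * (u : A))

lemma outer_outer (a b c d : A) (t : A ⊗[ℂ] A) :
    outerAct a b (outerAct c d t) = outerAct (a*c) (d*b) t := by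
  induction t using TensorProduct.induction_on with
  | zero => simp
  | tmul x y => simp [outerAct, mul_assoc]
  | add x y hx hy => simp [hx, hy]
lemma inner_inner (a b c d : A) (t : A ⊗[ℂ] A) :
    innerAct a b (innerAct c d t) = innerAct (a*c) (d*b) t := by
  induction t using TensorProduct.induction_on with
  | zero => simp
  | tmul x y => simp [innerAct, mul_assoc]
  | add x y hx hy => simp [hx, hy]
lemma outer_one_one (t : A ⊗[ℂ] A) : outerAct (1:A) 1 t = t := by
  induction t using TensorProduct.induction_on with
  | zero => simp
  | tmul x y => simp [outerAct]
  | add x y hx hy => simp [hx, hy]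
lemma inner_one_one (t : A ⊗[ℂ] A) : innerAct (1:A) 1 t = t := by
  induction t using TensorProduct.induction_on with
  | zero => simp
  | tmul x y => simp [innerAct]
  | add x y hx hy => simp [hx, hy]

variable {br : A →ₗ[ℂ] A →ₗ[ℂ] A ⊗[ℂ] A}

lemma br_one_right (hbr : IsDoubleBracket br) (a : A) : br a 1 = 0 := by
  have h := hbr.right_der a 1 1
  rw [one_mul, outer_one_one] at h
  exact (left_eq_add.mp h)

lemma br_one_left (hbr : IsDoubleBracket br) (a : A) : br (1:A) a = 0 := by
  have h := hbr.left_der a 1 1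
  rw [one_mul, inner_one_one] at h
  exact (left_eq_add.mp h)

lemma br_inv_right (hbr : IsDoubleBracket br) (x : A) (w : Aˣ) :
    br x ((w⁻¹ : Aˣ) : A) = - outerAct ((w⁻¹:Aˣ):A) ((w⁻¹:Aˣ):A) (br x (w:A)) := by
  have h0 : outerAct 1 ((w⁻¹:Aˣ):A) (br x (w:A))
      + outerAct (w:A) 1 (br x ((w⁻¹:Aˣ):A)) = 0 := by
    rw [← hbr.right_der, Units.mul_inv, br_one_right hbr]
  have h1 := congrArg (outerAct ((w⁻¹:Aˣ):A) (1:A)) h0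
  rw [map_add, map_zero, outer_outer, outer_outer] at h1
  simp only [Units.inv_mul, one_mul, mul_one, outer_one_one] at h1
  exact eq_neg_of_add_eq_zero_right h1

lemma br_inv_left (hbr : IsDoubleBracket br) (w : Aˣ) (x : A) :
    br ((w⁻¹ : Aˣ) : A) x = - innerAct ((w⁻¹:Aˣ):A) ((w⁻¹:Aˣ):A) (br (w:A) x) := by
  have h0 : innerAct 1 (w:A) (br ((w⁻¹:Aˣ):A) x)
      + innerAct ((w⁻¹:Aˣ):A) 1 (br (w:A) x) = 0 := by
    rw [← hbr.left_der, Units.inv_mul, br_one_left hbr]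
  have h1 := congrArg (innerAct (1:A) ((w⁻¹:Aˣ):A)) h0
  rw [map_add, map_zero, inner_inner, inner_inner] at h1
  simp only [Units.mul_inv, one_mul, mul_one, inner_one_one] at h1
  exact eq_neg_of_add_eq_zero_left h1


/-- Span of commutators. -/
def Sc (A : Type*) [Ring A] [Algebra ℂ A] : Submodule ℂ A :=
  Submodule.span ℂ {x : A | ∃ a b : A, x = a * b - b * a}

lemma qcyc (x y : A) : (Sc A).mkQ (x * y) = (Sc A).mkQ (y * x) := by
  rw [← sub_eq_zero, ← map_sub, Submodule.mkQ_apply, Submodule.Quotient.mk_eq_zero]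
  exact Submodule.subset_span ⟨x, y, rfl⟩

/-- `Psi c e (x ⊗ y) = x * c * (y * e)`. -/
def Psi (c e : A) : A ⊗[ℂ] A →ₗ[ℂ] A :=
  (LinearMap.mul' ℂ A).comp
    (TensorProduct.map (LinearMap.mulRight ℂ c) (LinearMap.mulRight ℂ e))

lemma Psi_tmul (c e x y : A) : Psi c e (x ⊗ₜ[ℂ] y) = x * c * (y * e) := by
  simp [Psi]

lemma mul'_eq_Psi (t : A ⊗[ℂ] A) : LinearMap.mul' ℂ A t = Psi 1 1 t := by
  induction t using TensorProduct.induction_on with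
  | zero => simp
  | tmul x y => simp [Psi_tmul]
  | add x y hx hy => simp [hx, hy]

lemma Psi_inner (c e a b : A) (t : A ⊗[ℂ] A) :
    Psi c e (innerAct a b t) = Psi (b * c * a) e t := by
  induction t using TensorProduct.induction_on with
  | zero => simp
  | tmul x y => simp [Psi_tmul, innerAct, mul_assoc]
  | add x y hx hy => simp [map_add, hx, hy]

lemma q_Psi_outer (c e a b : A) (t : A ⊗[ℂ] A) :
    (Sc A).mkQ (Psi c e (outerAct a b t)) = (Sc A).mkQ (Psi c (b * e * a) t) := by
  induction t using TensorProduct.induction_on with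
  | zero => simp
  | tmul x y =>
      rw [outerAct]
      simp only [TensorProduct.map_tmul, LinearMap.mulLeft_apply, LinearMap.mulRight_apply,
        Psi_tmul]
      rw [show a * x * c * (y * b * e) = a * (x * c * (y * (b * e))) by simp [mul_assoc]]
      rw [qcyc]
      congr 1
      simp [mul_assoc]
  | add x y hx hy => simp only [map_add, hx, hy]

lemma brL (hbr : IsDoubleBracket br) (x y : A) :
    ∀ (n : ℕ) (c : A), Commute c x →
      Psi c 1 (br (x ^ (n + 1)) y) = ((n + 1 : ℕ) : ℂ) • Psi (c * x ^ n) 1 (br x y) := by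
  intro n
  induction n with
  | zero => intro c _; simp
  | succ n ih =>
      intro c hc
      rw [pow_succ, hbr.left_der, map_add, Psi_inner, Psi_inner]
      rw [ih (x * c * 1) (by rw [mul_one]; exact (Commute.refl x).mul_left hc)]
      rw [show x * c * 1 * x ^ n = c * x ^ (n + 1) by
        rw [mul_one, ← hc.eq, mul_assoc, ← pow_succ']]
      rw [show (1 : A) * c * x ^ (n + 1) = c * x ^ (n + 1) by rw [one_mul]]
      push_cast
      module

lemma brM (hbr : IsDoubleBracket br) (x y : A) :
    ∀ (n : ℕ) (c e : A), Commute e y →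
      (Sc A).mkQ (Psi c e (br x (y ^ (n + 1))))
        = ((n + 1 : ℕ) : ℂ) • (Sc A).mkQ (Psi c (y ^ n * e) (br x y)) := by
  intro n
  induction n with
  | zero => intro c e _; simp
  | succ n ih =>
      intro c e hey
      rw [pow_succ, hbr.right_der, map_add, map_add, q_Psi_outer, q_Psi_outer]
      rw [ih c (y * e * 1) (by rw [mul_one]; exact (Commute.refl y).mul_left hey)]
      rw [show y ^ n * (y * e * 1) = y ^ (n + 1) * e by
        rw [mul_one, ← mul_assoc, ← pow_succ]]
      rw [show (1 : A) * e * y ^ (n + 1) = y ^ (n + 1) * e by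
        rw [one_mul, (hey.pow_right (n + 1)).eq]]
      push_cast
      module


lemma br_hh (hbr : IsDoubleBracket br) (u v : Aˣ)
    (hvv : br (v : A) (v : A)
      = (2 : ℂ)⁻¹ • (((v : A) * v) ⊗ₜ[ℂ] (1 : A) - (1 : A) ⊗ₜ[ℂ] ((v : A) * v)))
    (huu : br (u : A) (u : A)
      = -((2 : ℂ)⁻¹ • (((u : A) * u) ⊗ₜ[ℂ] (1 : A) - (1 : A) ⊗ₜ[ℂ] ((u : A) * u))))
    (hvu : br (v : A) (u : A)
      = (2 : ℂ)⁻¹ • (((u : A) * v) ⊗ₜ[ℂ] (1 : A) + (1 : A) ⊗ₜ[ℂ] ((v : A) * u)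
          - (v : A) ⊗ₜ[ℂ] (u : A) + (u : A) ⊗ₜ[ℂ] (v : A)))
    (l : ℂ) :
    ∃ P : A, br (kontH u v l) (kontH u v l)
      = P ⊗ₜ[ℂ] (1 : A) - (1 : A) ⊗ₜ[ℂ] P
        + ((u : A) + ((v⁻¹:Aˣ):A) + l • (((u⁻¹:Aˣ):A) * ((v⁻¹:Aˣ):A))) ⊗ₜ[ℂ]
            (((u⁻¹:Aˣ):A) + (v : A) + l • ((v : A) * (u : A)))
        - (((u⁻¹:Aˣ):A) + (v : A) + l • ((v : A) * (u : A))) ⊗ₜ[ℂ]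
            ((u : A) + ((v⁻¹:Aˣ):A) + l • (((u⁻¹:Aˣ):A) * ((v⁻¹:Aˣ):A))) := by
  have buv : br ((u : A)) ((v : A))
      = -((2 : ℂ)⁻¹ • ((1 : A) ⊗ₜ[ℂ] ((u:A) * (v:A)) + ((v:A) * (u:A)) ⊗ₜ[ℂ] (1 : A)
          - (u:A) ⊗ₜ[ℂ] (v:A) + (v:A) ⊗ₜ[ℂ] (u:A))) := by
    rw [hbr.cyclic, hvu]
    simp only [flipT, map_smul, map_add, map_sub, LinearEquiv.coe_coe,
      TensorProduct.comm_tmul]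
  refine ⟨(2:ℂ)⁻¹ • (
      - l • (((u⁻¹:Aˣ):A))
      + (((u⁻¹:Aˣ):A) * ((u⁻¹:Aˣ):A))
      + l • (((u⁻¹:Aˣ):A) * ((u⁻¹:Aˣ):A) * ((v⁻¹:Aˣ):A))
      + (((u⁻¹:Aˣ):A) * ((v⁻¹:Aˣ):A))
      - l • (((u⁻¹:Aˣ):A) * ((v⁻¹:Aˣ):A) * ((u⁻¹:Aˣ):A))
      - (l*l) • (((u⁻¹:Aˣ):A) * ((v⁻¹:Aˣ):A) * ((u⁻¹:Aˣ):A) * ((v⁻¹:Aˣ):A))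
      - l • (((u⁻¹:Aˣ):A) * ((v⁻¹:Aˣ):A) * ((v⁻¹:Aˣ):A))
      - l • (((u⁻¹:Aˣ):A) * ((v⁻¹:Aˣ):A) * (u:A))
      + (((u⁻¹:Aˣ):A) * (v:A))
      + l • (((u⁻¹:Aˣ):A) * (v:A) * (u:A))
      - l • (((v⁻¹:Aˣ):A))
      - (((v⁻¹:Aˣ):A) * ((u⁻¹:Aˣ):A))
      - l • (((v⁻¹:Aˣ):A) * ((u⁻¹:Aˣ):A) * ((v⁻¹:Aˣ):A))
      - (((v⁻¹:Aˣ):A) * ((v⁻¹:Aˣ):A))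
      - (((v⁻¹:Aˣ):A) * (u:A))
      + l • ((u:A))
      - ((u:A) * ((v⁻¹:Aˣ):A))
      - ((u:A) * (u:A))
      + ((u:A) * (v:A))
      + l • ((u:A) * (v:A) * (u:A))
      + l • ((v:A))
      + ((v:A) * ((u⁻¹:Aˣ):A))
      + l • ((v:A) * ((u⁻¹:Aˣ):A) * ((v⁻¹:Aˣ):A))
      - ((v:A) * (u:A))
      - l • ((v:A) * (u:A) * ((v⁻¹:Aˣ):A))
      - l • ((v:A) * (u:A) * (u:A))
      + l • ((v:A) * (u:A) * (v:A))
      + (l*l) • ((v:A) * (u:A) * (v:A) * (u:A))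
      + ((v:A) * (v:A))
      + l • ((v:A) * (v:A) * (u:A))), ?_⟩
  rw [kontH]
  simp only [map_add, map_smul, LinearMap.add_apply, LinearMap.smul_apply,
    hbr.left_der, hbr.right_der, br_inv_left hbr, br_inv_right hbr, huu, hvv, hvu, buv]
  simp only [outerAct, innerAct, TensorProduct.map_tmul, LinearMap.mulLeft_apply,
    LinearMap.mulRight_apply, map_add, map_sub, map_smul, map_neg,
    TensorProduct.tmul_add, TensorProduct.add_tmul, TensorProduct.tmul_sub,
    TensorProduct.sub_tmul, TensorProduct.tmul_smul, ← TensorProduct.smul_tmul',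
    one_mul, mul_one, mul_assoc, Units.mul_inv_cancel_left, Units.inv_mul_cancel_left,
    Units.mul_inv, Units.inv_mul]
  module


lemma qPsiT (hbr : IsDoubleBracket br) (u v : Aˣ)
    (hvv : br (v : A) (v : A)
      = (2 : ℂ)⁻¹ • (((v : A) * v) ⊗ₜ[ℂ] (1 : A) - (1 : A) ⊗ₜ[ℂ] ((v : A) * v)))
    (huu : br (u : A) (u : A)
      = -((2 : ℂ)⁻¹ • (((u : A) * u) ⊗ₜ[ℂ] (1 : A) - (1 : A) ⊗ₜ[ℂ] ((u : A) * u))))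
    (hvu : br (v : A) (u : A)
      = (2 : ℂ)⁻¹ • (((u : A) * v) ⊗ₜ[ℂ] (1 : A) + (1 : A) ⊗ₜ[ℂ] ((v : A) * u)
          - (v : A) ⊗ₜ[ℂ] (u : A) + (u : A) ⊗ₜ[ℂ] (v : A)))
    (l : ℂ) (α β : ℕ) :
    (Sc A).mkQ (Psi ((kontH u v l) ^ α) ((kontH u v l) ^ β)
      (br (kontH u v l) (kontH u v l))) = 0 := by
  obtain ⟨P, hP⟩ := br_hh hbr u v hvv huu hvu l
  set h := kontH u v l with hh
  set g1 : A := (u : A) + ((v⁻¹:Aˣ):A) + l • (((u⁻¹:Aˣ):A) * ((v⁻¹:Aˣ):A)) with hg1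
  set g2 : A := ((u⁻¹:Aˣ):A) + (v : A) + l • ((v : A) * (u : A)) with hg2
  have hsum : g2 = h - g1 := by
    rw [hh, kontH, hg1, hg2]; module
  rw [hP, hsum]
  simp only [map_add, map_sub, Psi_tmul]
  have e1 : (Sc A).mkQ (P * h ^ α * (1 * h ^ β))
      = (Sc A).mkQ (1 * h ^ α * (P * h ^ β)) := by
    calc (Sc A).mkQ (P * h ^ α * (1 * h ^ β))
        = (Sc A).mkQ (P * h ^ (α + β)) := by rw [mul_assoc, one_mul, ← pow_add]
      _ = (Sc A).mkQ ((P * h ^ β) * h ^ α) := by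
            rw [Nat.add_comm, pow_add, ← mul_assoc]
      _ = (Sc A).mkQ (h ^ α * (P * h ^ β)) := qcyc _ _
      _ = (Sc A).mkQ (1 * h ^ α * (P * h ^ β)) := by rw [one_mul]
  have e2 : (Sc A).mkQ (g1 * h ^ α * (h * h ^ β))
      = (Sc A).mkQ (h * h ^ α * (g1 * h ^ β)) := by
    calc (Sc A).mkQ (g1 * h ^ α * (h * h ^ β))
        = (Sc A).mkQ (g1 * (h ^ α * h ^ (β + 1))) := by rw [mul_assoc, pow_succ']
      _ = (Sc A).mkQ (g1 * h ^ (α + (β + 1))) := by rw [← pow_add]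
      _ = (Sc A).mkQ ((g1 * h ^ β) * h ^ (α + 1)) := by
            rw [show α + (β + 1) = β + (α + 1) by omega, pow_add, ← mul_assoc]
      _ = (Sc A).mkQ (h ^ (α + 1) * (g1 * h ^ β)) := qcyc _ _
      _ = (Sc A).mkQ (h * h ^ α * (g1 * h ^ β)) := by rw [pow_succ']
  simp only [sub_mul, mul_sub, map_sub]
  rw [e1, e2]
  abel


/-- For the double quasi-Poisson bracket of the one-loop quiver and the
modified Kontsevich Hamiltonian `h_λ`, the multiplied brackets `m(⟨⟨h_λ^k, h_λ^ℓ⟩⟩)` of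
powers of `h_λ` lie in the span of commutators, i.e. the classes of the powers of `h_λ`
pairwise commute in `A/[A,A]`. -/
theorem kontsevich_powers_commute
    (br : A →ₗ[ℂ] A →ₗ[ℂ] A ⊗[ℂ] A) (hbr : IsDoubleBracket br)
    (u v : Aˣ)
    (hvv : br (v : A) (v : A)
      = (2 : ℂ)⁻¹ • (((v : A) * v) ⊗ₜ[ℂ] (1 : A) - (1 : A) ⊗ₜ[ℂ] ((v : A) * v)))
    (huu : br (u : A) (u : A)
      = -((2 : ℂ)⁻¹ • (((u : A) * u) ⊗ₜ[ℂ] (1 : A) - (1 : A) ⊗ₜ[ℂ] ((u : A) * u))))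
    (hvu : br (v : A) (u : A)
      = (2 : ℂ)⁻¹ • (((u : A) * v) ⊗ₜ[ℂ] (1 : A) + (1 : A) ⊗ₜ[ℂ] ((v : A) * u)
          - (v : A) ⊗ₜ[ℂ] (u : A) + (u : A) ⊗ₜ[ℂ] (v : A)))
    (l : ℂ) :
    ∀ k m : ℕ, 1 ≤ k → 1 ≤ m →
      LinearMap.mul' ℂ A (br (kontH u v l ^ k) (kontH u v l ^ m)) ∈
        Submodule.span ℂ {x : A | ∃ a b : A, x = a * b - b * a} := by
  intro k m hk hm
  obtain ⟨k', rfl⟩ : ∃ k', k = k' + 1 := ⟨k - 1, by omega⟩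
  obtain ⟨m', rfl⟩ : ∃ m', m = m' + 1 := ⟨m - 1, by omega⟩
  set h := kontH u v l with hh
  suffices hq : (Sc A).mkQ (LinearMap.mul' ℂ A (br (h ^ (k' + 1)) (h ^ (m' + 1)))) = 0 by
    rw [Submodule.mkQ_apply, Submodule.Quotient.mk_eq_zero] at hq
    exact hq
  rw [mul'_eq_Psi, brL hbr h (h ^ (m' + 1)) k' 1 (Commute.one_left h), map_smul,
    brM hbr h h m' (1 * h ^ k') 1 (Commute.one_left h)]
  rw [show (1 : A) * h ^ k' = h ^ k' by rw [one_mul],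
    show (h : A) ^ m' * 1 = h ^ m' by rw [mul_one]]
  rw [hh, qPsiT hbr u v hvv huu hvu l k' m']
  simp

end Stmt16
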